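/- Let m ≥ 1 and let f = ∏_i (x − a_i)^{b_i} with a_1,…,a_r ∈ ℂ pairwise distinct and b_1,…,b_r ∈ ℤ. Suppose for each 1 ≤ i ≤ m a polynomial P_i ∈ Q_i(f) is given with P_i(x,x) = ∏_{j=1}^r (x − a_j)^{d_i(b_j)}. Then every F ∈ Q_m(f) can be written as F = Σ_{i=1}^m r_i·(x − y)^{2(m−i)}·P_i + (x − y)^{2m}·G, where each r_i ∈ ℂ[x,y] is a symmetric polynomial and G ∈ ℂ[x,y] is arbitrary (note that Q_0(f) = ℂ[x,y]). -/

import Mathlib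

open MvPolynomial

/-- For `f = ∏ i (x − a_i)^{b_i}`, the numerator `g(x) = ∏_{i : b_i > 0} (x − a_i)^{b_i}`,
as a polynomial in the variable `X v` of `ℂ[x,y]`. -/
noncomputable def numerAt {r : ℕ} (a : Fin r → ℂ) (b : Fin r → ℤ) (v : Fin 2) :
    MvPolynomial (Fin 2) ℂ :=
  ∏ i ∈ Finset.univ.filter (fun i => 0 < b i), (X v - MvPolynomial.C (a i)) ^ (b i).toNat

/-- For `f = ∏ i (x − a_i)^{b_i}`, the denominator `h(x) = ∏_{i : b_i < 0} (x − a_i)^{−b_i}`,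
as a polynomial in the variable `X v` of `ℂ[x,y]`. -/
noncomputable def denomAt {r : ℕ} (a : Fin r → ℂ) (b : Fin r → ℤ) (v : Fin 2) :
    MvPolynomial (Fin 2) ℂ :=
  ∏ i ∈ Finset.univ.filter (fun i => b i < 0), (X v - MvPolynomial.C (a i)) ^ (-(b i)).toNat

/-- `F ∈ Q_m(f)` for `f = g/h = ∏ i (x − a_i)^{b_i}`: the divisibility
`(x − y)^{2m+1} ∣ g(x)h(y)F(x,y) − g(y)h(x)F(y,x)` holds in `ℂ[x,y]`. -/
def MemQalg {r : ℕ} (a : Fin r → ℂ) (b : Fin r → ℤ) (m : ℕ)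
    (F : MvPolynomial (Fin 2) ℂ) : Prop :=
  (X 0 - X 1) ^ (2 * m + 1) ∣
    numerAt a b 0 * denomAt a b 1 * F
      - numerAt a b 1 * denomAt a b 0 * rename (Equiv.swap (0 : Fin 2) 1) F

/-- The restriction of `F ∈ ℂ[x,y]` to the diagonal, i.e., the one-variable
polynomial `F(x,x)`. -/
noncomputable def diag (F : MvPolynomial (Fin 2) ℂ) : Polynomial ℂ :=
  MvPolynomial.aeval (fun _ : Fin 2 => (Polynomial.X : Polynomial ℂ)) F


section AuxiliaryProofsA
open Polynomial Finset

lemma support_card_mul_X_pow (S : Polynomial ℂ) (v : ℕ) :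
    (S * Polynomial.X ^ v).support.card = S.support.card := by
  have h : (S * Polynomial.X ^ v).support = S.support.map ⟨(· + v), add_left_injective v⟩ := by
    ext n
    simp only [Polynomial.mem_support_iff, Finset.mem_map, Function.Embedding.coeFn_mk,
      Polynomial.coeff_mul_X_pow']
    constructor
    · intro h
      split_ifs at h with hv
      · exact ⟨n - v, by simpa using h, by omega⟩
      · simp at h
    · rintro ⟨a, ha, rfl⟩
      simpa using ha
  rw [h, Finset.card_map]

lemma card_support_of_pow_dvd (b : ℕ) : ∀ (R : Polynomial ℂ), R ≠ 0 →
    (Polynomial.X + 1) ^ b ∣ R → b + 1 ≤ R.support.card := by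
  induction b with
  | zero =>
    intro R hR _
    simpa [Finset.card_pos] using (Polynomial.support_nonempty).2 hR
  | succ b ih =>
    intro R hR hdvd
    obtain ⟨S, hS, hXS⟩ := R.exists_eq_pow_rootMultiplicity_mul_and_not_dvd hR 0
    simp only [Polynomial.C_0, sub_zero] at hS hXS
    have hS0 : S ≠ 0 := by rintro rfl; simp at hS; exact hR hS
    have hScoeff : S.coeff 0 ≠ 0 := fun h => hXS (Polynomial.X_dvd_iff.2 h)
    have hcop : IsCoprime ((Polynomial.X : Polynomial ℂ) ^ R.rootMultiplicity 0) ((Polynomial.X + 1) ^ (b + 1)) := by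
      apply IsCoprime.pow
      exact ⟨-1, 1, by ring⟩
    have hdvdS : (Polynomial.X + 1) ^ (b + 1) ∣ S := by
      refine hcop.symm.dvd_of_dvd_mul_left ?_
      rw [← hS]; exact hdvd
    set S' := derivative S with hS'def
    have hdvdS' : (Polynomial.X + 1) ^ b ∣ S' := by
      obtain ⟨T, hT⟩ := hdvdS
      rw [hS'def, hT]
      rw [Polynomial.derivative_mul, Polynomial.derivative_pow]
      simp only [Polynomial.derivative_add, Polynomial.derivative_X, Polynomial.derivative_one,
        add_zero, mul_one]
      refine Dvd.dvd.add (Dvd.dvd.mul_right ?_ _) (Dvd.dvd.mul_right (pow_dvd_pow _ (Nat.le_succ b)) _)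
      simp only [Nat.add_sub_cancel]
      exact Dvd.intro_left _ rfl
    have hS'0 : S' ≠ 0 := by
      intro h
      have hdeg : S.natDegree = 0 := Polynomial.natDegree_eq_zero_of_derivative_eq_zero h
      have : b + 1 ≤ S.natDegree := by
        have h1 : ((Polynomial.X:Polynomial ℂ) + 1).natDegree = 1 := by
          simpa using Polynomial.natDegree_X_add_C (1:ℂ)
        have := Polynomial.natDegree_le_of_dvd hdvdS hS0
        simpa [Polynomial.natDegree_pow, h1] using this
      omega
    have hineq := ih S' hS'0 hdvdS'
    have hcard : S'.support.card + 1 ≤ S.support.card := by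
      have h0mem : 0 ∈ S.support := Polynomial.mem_support_iff.2 hScoeff
      have hsub : S'.support.card ≤ (S.support.erase 0).card := by
        apply Finset.card_le_card_of_injOn (fun n => n + 1)
        · intro n hn
          rw [Finset.mem_coe, Polynomial.mem_support_iff, hS'def, Polynomial.coeff_derivative] at hn
          have : S.coeff (n + 1) ≠ 0 := fun h => hn (by simp [h])
          exact Finset.mem_erase.2 ⟨Nat.succ_ne_zero n, Polynomial.mem_support_iff.2 this⟩
        · intro x _ y _ h; exact Nat.succ_injective (by simpa using h)
      have := Finset.card_erase_of_mem h0mem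
      omega
    have : R.support.card = S.support.card := by
      rw [hS, mul_comm, support_card_mul_X_pow]
    omega

lemma core_lemma (m bn : ℕ) (hm : 1 ≤ m) (w : ℕ → ℂ) (hw0 : w 0 ≠ 0)
    (f : ℕ → Polynomial ℂ)
    (H : ∀ k ≤ 2 * m, ∀ s < bn,
      ∑ i ∈ Finset.range (k+1), ∑ s₁ ∈ Finset.range (s+1),
        (if bn ≤ s₁ + i then ((s₁+i).choose i : ℂ) * w (s₁ + i - bn) else 0)
          * (f (k - i)).coeff (s - s₁) = 0) :
    ∀ j s, s + j < min m bn → (f j).coeff s = 0 := by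
  have hX1 : (Polynomial.X + 1 : Polynomial ℂ) ≠ 0 := fun h => by
    simpa [Polynomial.coeff_one] using congrArg (fun p => Polynomial.coeff p 1) h
  have hdegX1 : ((Polynomial.X + 1 : Polynomial ℂ)).natDegree = 1 := by
    simpa using Polynomial.natDegree_X_add_C (1:ℂ)
  have main : ∀ μ, μ < min m bn → ∀ j s, s + j = μ → (f j).coeff s = 0 := by
    intro μ
    induction μ using Nat.strong_induction_on with
    | _ μ IH =>
      intro hμ j s hjs
      have IH' : ∀ j' s', s' + j' < μ → (f j').coeff s' = 0 := fun j' s' h =>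
        IH _ h (lt_trans h hμ) j' s' rfl
      have hμm : μ < m := lt_of_lt_of_le hμ (min_le_left _ _)
      have hμb : μ < bn := lt_of_lt_of_le hμ (min_le_right _ _)
      set φ : ℕ → ℂ := fun j' => (f j').coeff (μ - j') with hφ
      set Q : Polynomial ℂ := ∑ j' ∈ Finset.range (μ+1), Polynomial.monomial j' (φ j') with hQ
      have hQcoeff : ∀ j', Q.coeff j' = if j' ≤ μ then φ j' else 0 := by
        intro j'
        rw [hQ, Polynomial.finset_sum_coeff]
        simp only [Polynomial.coeff_monomial]
        rw [Finset.sum_ite_eq' (Finset.range (μ+1)) j' φ]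
        simp [Nat.lt_succ_iff]
      have hQdeg : Q.natDegree ≤ μ := by
        apply Polynomial.natDegree_le_iff_coeff_eq_zero.mpr
        intro N hN
        rw [hQcoeff]
        simp [Nat.not_le.mpr hN, le_of_lt hN, (by omega : ¬ (N ≤ μ))]
      -- the key vanishing claim
      have hvan : ∀ k, μ < k → k ≤ 2*m → k ≤ μ + bn → ((Polynomial.X+1)^bn * Q).coeff k = 0 := by
        intro k hk1 hk2 hk3
        set s' : ℕ := μ + bn - k with hs'
        have hs'k : s' + k = μ + bn := by omega
        have hs'b : s' < bn := by omega
        have hsum := H k hk2 s' hs'b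
        -- helper : terms above level μ vanish
        have hhelp : ∀ i s₁, i ≤ k → s₁ ≤ s' → bn < s₁ + i →
            (f (k - i)).coeff (s' - s₁) = 0 := by
          intro i s₁ hik hs₁ hbig
          exact IH' _ _ (by omega)
        -- inner sum computation
        have hinner : ∀ i ∈ Finset.range (k+1),
            (∑ s₁ ∈ Finset.range (s'+1),
              (if bn ≤ s₁ + i then ((s₁+i).choose i : ℂ) * w (s₁ + i - bn) else 0)
                * (f (k - i)).coeff (s' - s₁))
            = if i ≤ bn ∧ bn ≤ s' + i then
                (bn.choose i : ℂ) * w 0 * (f (k - i)).coeff (s' + i - bn) else 0 := by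
          intro i hi
          rw [Finset.mem_range] at hi
          by_cases hib : i ≤ bn ∧ bn ≤ s' + i
          · rw [if_pos hib]
            rw [Finset.sum_eq_single (bn - i)]
            · rw [if_pos (by omega)]
              have e1 : bn - i + i = bn := by omega
              have e2 : s' - (bn - i) = s' + i - bn := by omega
              rw [e1, e2, Nat.sub_self]
            · intro s₁ hs₁ hne
              rw [Finset.mem_range] at hs₁
              by_cases hcnd : bn ≤ s₁ + i
              · have : bn < s₁ + i := by omega
                rw [hhelp i s₁ (by omega) (by omega) this, mul_zero]
              · rw [if_neg hcnd, zero_mul]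
            · intro hmem
              exact absurd (Finset.mem_range.mpr (by omega)) hmem
          · rw [if_neg hib]
            apply Finset.sum_eq_zero
            intro s₁ hs₁
            rw [Finset.mem_range] at hs₁
            by_cases hcnd : bn ≤ s₁ + i
            · have : bn < s₁ + i := by
                rcases Nat.lt_or_ge bn (s₁ + i) with h | h
                · exact h
                · exfalso; exact hib ⟨by omega, by omega⟩
              rw [hhelp i s₁ (by omega) (by omega) this, mul_zero]
            · rw [if_neg hcnd, zero_mul]
        rw [Finset.sum_congr rfl hinner] at hsum
        -- reflect the sum
        rw [← Finset.sum_range_reflect] at hsum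
        -- termwise identification
        have hterm : ∀ j' ∈ Finset.range (k+1),
            (if k - j' ≤ bn ∧ bn ≤ s' + (k - j') then
                (bn.choose (k - j') : ℂ) * w 0 * (f (k - (k - j'))).coeff (s' + (k - j') - bn) else 0)
            = if j' ≤ μ then w 0 * ((bn.choose (k - j') : ℂ) * φ j') else 0 := by
          intro j' hj'
          rw [Finset.mem_range] at hj'
          by_cases hjμ : j' ≤ μ
          · rw [if_pos hjμ]
            by_cases hkj : k - j' ≤ bn
            · rw [if_pos ⟨hkj, by omega⟩]
              have e1 : k - (k - j') = j' := by omega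
              have e2 : s' + (k - j') - bn = μ - j' := by omega
              rw [e1, e2, hφ]
              ring
            · rw [if_neg (by tauto)]
              rw [Nat.choose_eq_zero_of_lt (by omega)]
              simp
          · rw [if_neg hjμ, if_neg (by omega)]
        rw [show k + 1 - 1 = k from rfl] at hsum
        rw [Finset.sum_congr rfl hterm] at hsum
        -- restrict sum to range (μ+1)
        rw [← Finset.sum_subset (Finset.range_subset_range.2 (by omega : μ + 1 ≤ k + 1))
          (fun x _ hx => by
            rw [Finset.mem_range, Nat.lt_succ_iff] at hx
            rw [if_neg hx])] at hsum
        have hsum2 : w 0 * ∑ j' ∈ Finset.range (μ+1), (bn.choose (k - j') : ℂ) * φ j' = 0 := by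
          rw [Finset.mul_sum]
          rw [← hsum]
          apply Finset.sum_congr rfl
          intro j' hj'
          rw [Finset.mem_range, Nat.lt_succ_iff] at hj'
          rw [if_pos hj']
        have hsum3 : ∑ j' ∈ Finset.range (μ+1), (bn.choose (k - j') : ℂ) * φ j' = 0 :=
          (mul_eq_zero.mp hsum2).resolve_left hw0
        -- now compute the coefficient
        have hcoeff : ((Polynomial.X+1)^bn * Q).coeff k
            = ∑ j' ∈ Finset.range (μ+1), (bn.choose (k - j') : ℂ) * φ j' := by
          rw [hQ, Finset.mul_sum, Polynomial.finset_sum_coeff]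
          apply Finset.sum_congr rfl
          intro j' hj'
          rw [Finset.mem_range, Nat.lt_succ_iff] at hj'
          rw [← Polynomial.C_mul_X_pow_eq_monomial, ← mul_assoc, Polynomial.coeff_mul_X_pow',
            if_pos (by omega : j' ≤ k), Polynomial.coeff_mul_C, Polynomial.coeff_X_add_one_pow]
        exact hcoeff.trans hsum3
      -- conclude Q = 0
      have hQ0 : Q = 0 := by
        by_contra hQne
        set R : Polynomial ℂ := (Polynomial.X+1)^bn * Q with hR
        have hRne : R ≠ 0 := mul_ne_zero (pow_ne_zero _ hX1) hQne
        have hRdegeq : R.natDegree = bn + Q.natDegree := by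
          rw [hR, Polynomial.natDegree_mul (pow_ne_zero _ hX1) hQne,
            Polynomial.natDegree_pow, hdegX1, mul_one]
        have hRdeg : R.natDegree ≤ μ + bn := by omega
        by_cases hcase : μ + bn ≤ 2*m
        · have hall : ∀ k, μ < k → R.coeff k = 0 := by
            intro k hk
            by_cases hk2 : k ≤ μ + bn
            · exact hvan k hk (by omega) hk2
            · exact Polynomial.coeff_eq_zero_of_natDegree_lt (by omega)
          have : R.natDegree ≤ μ := Polynomial.natDegree_le_iff_coeff_eq_zero.mpr
            (fun N hN => hall N hN)
          omega
        · have hsub : R.support ⊆ Finset.range (μ+1) ∪ Finset.Ioc (2*m) (μ + bn) := by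
            intro k hk
            have hkc := Polynomial.mem_support_iff.mp hk
            have hkd : k ≤ μ + bn := le_trans (Polynomial.le_natDegree_of_ne_zero hkc) hRdeg
            rw [Finset.mem_union, Finset.mem_range, Finset.mem_Ioc]
            by_cases h1 : k ≤ μ
            · left; omega
            · right
              refine ⟨?_, hkd⟩
              by_contra h2
              exact hkc (hvan k (by omega) (by omega) hkd)
          have hcard : R.support.card ≤ (μ+1) + ((μ+bn) - 2*m) := by
            calc R.support.card ≤ (Finset.range (μ+1) ∪ Finset.Ioc (2*m) (μ + bn)).card :=
                  Finset.card_le_card hsub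
              _ ≤ (Finset.range (μ+1)).card + (Finset.Ioc (2*m) (μ + bn)).card :=
                  Finset.card_union_le _ _
              _ = (μ+1) + ((μ+bn) - 2*m) := by rw [Finset.card_range, Nat.card_Ioc]
          have hlow := card_support_of_pow_dvd bn R hRne ⟨Q, rfl⟩
          omega
      -- extract the conclusion
      have : Q.coeff j = 0 := by rw [hQ0]; simp
      rw [hQcoeff j, if_pos (by omega)] at this
      rw [hφ] at this
      simpa [show μ - j = s by omega] using this
  intro j s h
  exact main (s + j) h j s rfl

end AuxiliaryProofsA

section AuxiliaryProofsB
open Polynomial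

section PartThree

lemma diag_sub (p q : MvPolynomial (Fin 2) ℂ) : diag (p-q) = diag p - diag q :=
  map_sub (MvPolynomial.aeval _) p q

lemma diag_pow (p : MvPolynomial (Fin 2) ℂ) (n : ℕ) : diag (p^n) = diag p ^ n :=
  map_pow (MvPolynomial.aeval _) p n

lemma diag_prod {ι : Type*} (s : Finset ι) (f : ι → MvPolynomial (Fin 2) ℂ) :
    diag (∏ i ∈ s, f i) = ∏ i ∈ s, diag (f i) :=
  map_prod (MvPolynomial.aeval _) f s

lemma diag_mul (p q : MvPolynomial (Fin 2) ℂ) : diag (p*q) = diag p * diag q :=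
  map_mul (MvPolynomial.aeval _) p q

lemma diag_add (p q : MvPolynomial (Fin 2) ℂ) : diag (p+q) = diag p + diag q :=
  map_add (MvPolynomial.aeval _) p q

lemma diag_X (i : Fin 2) : diag (MvPolynomial.X i) = Polynomial.X :=
  MvPolynomial.aeval_X _ i

lemma diag_C (c : ℂ) : diag (MvPolynomial.C c) = Polynomial.C c := by
  simp [diag]

lemma algC (c : ℂ) : algebraMap ℂ (Polynomial (Polynomial ℂ)) c
    = Polynomial.C (Polynomial.C c) := by
  rw [Polynomial.algebraMap_apply]
  norm_num

lemma hasseDeriv_map_C (p : Polynomial ℂ) (i : ℕ) :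
    Polynomial.hasseDeriv i (p.map (Polynomial.C : ℂ →+* Polynomial ℂ))
      = (Polynomial.hasseDeriv i p).map Polynomial.C := by
  ext n
  rw [Polynomial.hasseDeriv_coeff, Polynomial.coeff_map, Polynomial.coeff_map,
    Polynomial.hasseDeriv_coeff]
  simp [mul_comm]

lemma Psi_coeff_eq_hasseDeriv (p : Polynomial ℂ) (i : ℕ) :
    ((Polynomial.aeval (Polynomial.C Polynomial.X + Polynomial.X :
        Polynomial (Polynomial ℂ)) p).coeff i) = Polynomial.hasseDeriv i p := by
  have h1 : (Polynomial.aeval (Polynomial.C Polynomial.X + Polynomial.X :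
      Polynomial (Polynomial ℂ)) p) = Polynomial.taylor Polynomial.X
        (p.map (Polynomial.C : ℂ →+* Polynomial ℂ)) := by
    rw [Polynomial.taylor_apply, Polynomial.comp, Polynomial.eval₂_map, Polynomial.aeval_def,
      add_comm (Polynomial.C Polynomial.X) Polynomial.X]
    have halg : algebraMap ℂ (Polynomial (Polynomial ℂ))
        = (Polynomial.C : Polynomial ℂ →+* Polynomial (Polynomial ℂ)).comp Polynomial.C :=
      RingHom.ext algC
    rw [halg]
  rw [h1, Polynomial.taylor_coeff, hasseDeriv_map_C, Polynomial.eval_map,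
    Polynomial.eval₂_C_X]

lemma Psi_coeff (p : Polynomial ℂ) (i s : ℕ) :
    ((Polynomial.aeval (Polynomial.C Polynomial.X + Polynomial.X :
        Polynomial (Polynomial ℂ)) p).coeff i).coeff s
      = ((s+i).choose i : ℂ) * p.coeff (s+i) := by
  rw [Psi_coeff_eq_hasseDeriv, Polynomial.hasseDeriv_coeff]

lemma lemA_pos (m : ℕ) (hm : 1 ≤ m) {r : ℕ} (a : Fin r → ℂ) (b : Fin r → ℤ)
    (ha : Function.Injective a) (j : Fin r) (hbj : 0 < b j)
    (F : MvPolynomial (Fin 2) ℂ) (hF : MemQalg a b m F) :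
    (Polynomial.X - Polynomial.C (a j)) ^ (min m (b j).toNat) ∣ diag F := by
  set α := a j with hα
  set bn := (b j).toNat with hbn
  have hbn1 : 1 ≤ bn := by omega
  set Φ : MvPolynomial (Fin 2) ℂ →ₐ[ℂ] Polynomial (Polynomial ℂ) :=
    MvPolynomial.aeval ![Polynomial.C (Polynomial.X + Polynomial.C α),
      Polynomial.C (Polynomial.X + Polynomial.C α) + Polynomial.X] with hΦ
  set Gp : Polynomial ℂ := ∏ i ∈ Finset.univ.filter (fun i => 0 < b i),
    (Polynomial.X + Polynomial.C (α - a i)) ^ (b i).toNat with hGp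
  set Hp : Polynomial ℂ := ∏ i ∈ Finset.univ.filter (fun i => b i < 0),
    (Polynomial.X + Polynomial.C (α - a i)) ^ (-(b i)).toNat with hHp
  have hΦX0 : Φ (MvPolynomial.X 0) = Polynomial.C (Polynomial.X + Polynomial.C α) := by
    simp [hΦ]
  have hΦX1 : Φ (MvPolynomial.X 1)
      = Polynomial.C (Polynomial.X + Polynomial.C α) + Polynomial.X := by
    simp [hΦ]
  have hΦC : ∀ c : ℂ, Φ (MvPolynomial.C c) = Polynomial.C (Polynomial.C c) := by
    intro c
    rw [hΦ, MvPolynomial.aeval_C, algC]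
  have h1 : Φ (numerAt a b 0) = Polynomial.C Gp := by
    rw [numerAt, map_prod, hGp, map_prod]
    refine Finset.prod_congr rfl (fun i _ => ?_)
    simp only [map_pow, map_sub, map_add, hΦX0, hΦC, Polynomial.C_pow]
    ring
  have h2 : Φ (numerAt a b 1)
      = Polynomial.aeval (Polynomial.C Polynomial.X + Polynomial.X) Gp := by
    rw [numerAt, map_prod, hGp, map_prod]
    refine Finset.prod_congr rfl (fun i _ => ?_)
    simp only [map_pow, map_sub, map_add, hΦX1, hΦC, Polynomial.aeval_X,
      Polynomial.aeval_C, algC]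
    ring
  have h3 : Φ (denomAt a b 0) = Polynomial.C Hp := by
    rw [denomAt, map_prod, hHp, map_prod]
    refine Finset.prod_congr rfl (fun i _ => ?_)
    simp only [map_pow, map_sub, map_add, hΦX0, hΦC, Polynomial.C_pow]
    ring
  have h4 : Φ (denomAt a b 1)
      = Polynomial.aeval (Polynomial.C Polynomial.X + Polynomial.X) Hp := by
    rw [denomAt, map_prod, hHp, map_prod]
    refine Finset.prod_congr rfl (fun i _ => ?_)
    simp only [map_pow, map_sub, map_add, hΦX1, hΦC, Polynomial.aeval_X,
      Polynomial.aeval_C, algC]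
    ring
  -- factor Gp
  have hjmem : j ∈ Finset.univ.filter (fun i => 0 < b i) := by
    simp [hbj]
  set u : Polynomial ℂ := ∏ i ∈ (Finset.univ.filter (fun i => 0 < b i)).erase j,
    (Polynomial.X + Polynomial.C (α - a i)) ^ (b i).toNat with hu
  have hGfac : Gp = u * Polynomial.X ^ bn := by
    rw [hGp, ← Finset.mul_prod_erase _ _ hjmem, ← hu]
    rw [hα, sub_self, map_zero, add_zero, mul_comm, hbn]
  have hu0 : u.coeff 0 ≠ 0 := by
    rw [Polynomial.coeff_zero_eq_eval_zero, hu, Polynomial.eval_prod]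
    apply Finset.prod_ne_zero_iff.mpr
    intro i hi
    rw [Finset.mem_erase] at hi
    simp only [Polynomial.eval_pow, Polynomial.eval_add, Polynomial.eval_X, Polynomial.eval_C,
      zero_add]
    refine pow_ne_zero _ (sub_ne_zero.mpr ?_)
    intro h
    exact hi.1 (ha h.symm)
  have hH0 : Hp.coeff 0 ≠ 0 := by
    rw [Polynomial.coeff_zero_eq_eval_zero, hHp, Polynomial.eval_prod]
    apply Finset.prod_ne_zero_iff.mpr
    intro i hi
    rw [Finset.mem_filter] at hi
    simp only [Polynomial.eval_pow, Polynomial.eval_add, Polynomial.eval_X, Polynomial.eval_C,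
      zero_add]
    have hij : i ≠ j := fun h => by rw [h] at hi; omega
    refine pow_ne_zero _ (sub_ne_zero.mpr ?_)
    intro h
    exact hij (ha h.symm)
  -- divisibility after applying Φ
  have hD : (Polynomial.X : Polynomial (Polynomial ℂ)) ^ (2*m+1) ∣
      Polynomial.C Gp * (Polynomial.aeval (Polynomial.C Polynomial.X + Polynomial.X) Hp * Φ F)
      - Polynomial.C Hp * (Polynomial.aeval (Polynomial.C Polynomial.X + Polynomial.X) Gp
          * Φ (MvPolynomial.rename (Equiv.swap (0 : Fin 2) 1) F)) := by
    obtain ⟨W, hW⟩ := hF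
    have happ := congrArg Φ hW
    rw [map_sub, map_mul, map_mul, map_mul, map_mul, map_mul, map_pow, map_sub,
      hΦX0, hΦX1, h1, h2, h3, h4] at happ
    have hneg : (Polynomial.C (Polynomial.X + Polynomial.C α)
        - (Polynomial.C (Polynomial.X + Polynomial.C α) + Polynomial.X)
        : Polynomial (Polynomial ℂ)) = - Polynomial.X := by ring
    rw [hneg] at happ
    have hre : Polynomial.C Gp * (Polynomial.aeval (Polynomial.C Polynomial.X + Polynomial.X) Hp * Φ F)
        - Polynomial.C Hp * (Polynomial.aeval (Polynomial.C Polynomial.X + Polynomial.X) Gp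
            * Φ (MvPolynomial.rename (Equiv.swap (0 : Fin 2) 1) F))
        = Polynomial.C Gp * Polynomial.aeval (Polynomial.C Polynomial.X + Polynomial.X) Hp * Φ F
        - Polynomial.aeval (Polynomial.C Polynomial.X + Polynomial.X) Gp * Polynomial.C Hp
            * Φ (MvPolynomial.rename (Equiv.swap (0 : Fin 2) 1) F) := by
      ring
    rw [hre, happ]
    exact dvd_mul_of_dvd_left (pow_dvd_pow_of_dvd ⟨-1, by ring⟩ _) _
  set f : ℕ → Polynomial ℂ :=
    fun n => (Φ (MvPolynomial.rename (Equiv.swap (0 : Fin 2) 1) F)).coeff n with hf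
  have hcop : IsCoprime (Polynomial.X : Polynomial ℂ) Hp := by
    refine ⟨-(Polynomial.C (Hp.coeff 0)⁻¹) * Hp.divX, Polynomial.C (Hp.coeff 0)⁻¹, ?_⟩
    have hx := Polynomial.X_mul_divX_add Hp
    have hone : (Polynomial.C (Hp.coeff 0)⁻¹) * Polynomial.C (Hp.coeff 0) = 1 := by
      rw [← Polynomial.C_mul, inv_mul_cancel₀ hH0, Polynomial.C_1]
    calc -(Polynomial.C (Hp.coeff 0)⁻¹) * Hp.divX * Polynomial.X
          + Polynomial.C (Hp.coeff 0)⁻¹ * Hp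
        = Polynomial.C (Hp.coeff 0)⁻¹ * (Hp - Polynomial.X * Hp.divX) := by ring
      _ = Polynomial.C (Hp.coeff 0)⁻¹ * Polynomial.C (Hp.coeff 0) := by
          rw [show Hp - Polynomial.X * Hp.divX = Polynomial.C (Hp.coeff 0) from by
            linear_combination -hx]
      _ = 1 := hone
  have hkey : ∀ k ≤ 2*m, (Polynomial.X : Polynomial ℂ)^bn ∣
      (Polynomial.aeval (Polynomial.C Polynomial.X + Polynomial.X) Gp
        * Φ (MvPolynomial.rename (Equiv.swap (0 : Fin 2) 1) F)).coeff k := by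
    intro k hk
    have hc0 := Polynomial.X_pow_dvd_iff.mp hD k (by omega)
    rw [Polynomial.coeff_sub, sub_eq_zero, Polynomial.coeff_C_mul, Polynomial.coeff_C_mul] at hc0
    have hdvd1 : (Polynomial.X : Polynomial ℂ)^bn ∣ Gp *
        ((Polynomial.aeval (Polynomial.C Polynomial.X + Polynomial.X) Hp * Φ F).coeff k) :=
      Dvd.dvd.mul_right (hGfac ▸ Dvd.intro_left u rfl) _
    rw [hc0] at hdvd1
    have hcopb : IsCoprime ((Polynomial.X : Polynomial ℂ)^bn) Hp := hcop.pow_left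
    exact hcopb.dvd_of_dvd_mul_left hdvd1
  have hHyp : ∀ k ≤ 2 * m, ∀ s, s < bn →
      ∑ i ∈ Finset.range (k+1), ∑ s₁ ∈ Finset.range (s+1),
        (if bn ≤ s₁ + i then ((s₁+i).choose i : ℂ) * u.coeff (s₁ + i - bn) else 0)
          * (f (k - i)).coeff (s - s₁) = 0 := by
    intro k hk s hs
    have hz := Polynomial.X_pow_dvd_iff.mp (hkey k hk) s hs
    rw [Polynomial.coeff_mul, Finset.Nat.sum_antidiagonal_eq_sum_range_succ_mk] at hz
    rw [Polynomial.finset_sum_coeff] at hz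
    refine Eq.trans (Finset.sum_congr rfl fun i _ => ?_) hz
    rw [Polynomial.coeff_mul, Finset.Nat.sum_antidiagonal_eq_sum_range_succ_mk]
    refine Finset.sum_congr rfl fun s₁ _ => ?_
    rw [Psi_coeff, hGfac, Polynomial.coeff_mul_X_pow']
    by_cases hcnd : bn ≤ s₁ + i
    · rw [if_pos hcnd, if_pos hcnd]
    · rw [if_neg hcnd, if_neg hcnd, mul_zero, zero_mul]
  have hconc := core_lemma m bn hm u.coeff hu0 f hHyp 0
  have hdvd0 : (Polynomial.X : Polynomial ℂ) ^ (min m bn) ∣ f 0 := by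
    rw [Polynomial.X_pow_dvd_iff]
    intro d hd
    exact hconc d (by omega)
  have hdiagswap : diag (MvPolynomial.rename (Equiv.swap (0 : Fin 2) 1) F) = diag F := by
    rw [diag, MvPolynomial.aeval_rename]
    rfl
  have hf0gen : ∀ (G : MvPolynomial (Fin 2) ℂ),
      Polynomial.eval 0 (Φ G) = (diag G).comp (Polynomial.X + Polynomial.C α) := by
    intro G
    induction G using MvPolynomial.induction_on with
    | C c =>
      rw [hΦC, diag_C]
      simp
    | add p q hp hq =>
      rw [map_add, Polynomial.eval_add, hp, hq, diag_add, Polynomial.add_comp]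
    | mul_X p i hp =>
      have hXi : Polynomial.eval 0 (Φ (MvPolynomial.X i))
          = Polynomial.X + Polynomial.C α := by
        fin_cases i
        · show Polynomial.eval 0 (Φ (MvPolynomial.X 0)) = _
          rw [hΦX0]; simp
        · show Polynomial.eval 0 (Φ (MvPolynomial.X 1)) = _
          rw [hΦX1]; simp
      rw [map_mul, Polynomial.eval_mul, hp, hXi, diag_mul, diag_X, Polynomial.mul_comp,
        Polynomial.X_comp]
  have hf0 : f 0 = (diag F).comp (Polynomial.X + Polynomial.C α) := by
    have hgen := hf0gen (MvPolynomial.rename (Equiv.swap (0 : Fin 2) 1) F)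
    rw [hdiagswap] at hgen
    rw [hf]
    simpa [Polynomial.coeff_zero_eq_eval_zero] using hgen
  rw [hf0] at hdvd0
  obtain ⟨Z, hZ⟩ := hdvd0
  refine ⟨Z.comp (Polynomial.X - Polynomial.C α), ?_⟩
  have hcomp : diag F = ((diag F).comp (Polynomial.X + Polynomial.C α)).comp
      (Polynomial.X - Polynomial.C α) := by
    rw [Polynomial.comp_assoc]
    simp
  rw [hcomp, hZ, Polynomial.mul_comp, Polynomial.pow_comp, Polynomial.X_comp]

end PartThree

section PartFour

variable {r : ℕ} (a : Fin r → ℂ) (b : Fin r → ℤ)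

lemma diag_rename_swap (F : MvPolynomial (Fin 2) ℂ) :
    diag (MvPolynomial.rename (Equiv.swap (0 : Fin 2) 1) F) = diag F := by
  rw [diag, MvPolynomial.aeval_rename]
  rfl

lemma renameswap_X0 : MvPolynomial.rename (Equiv.swap (0 : Fin 2) 1) (MvPolynomial.X 0 : MvPolynomial (Fin 2) ℂ)
    = MvPolynomial.X 1 := by
  rw [MvPolynomial.rename_X, Equiv.swap_apply_left]

lemma renameswap_X1 : MvPolynomial.rename (Equiv.swap (0 : Fin 2) 1) (MvPolynomial.X 1 : MvPolynomial (Fin 2) ℂ)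
    = MvPolynomial.X 0 := by
  rw [MvPolynomial.rename_X, Equiv.swap_apply_right]

lemma renameswap_numer0 : MvPolynomial.rename (Equiv.swap (0 : Fin 2) 1) (numerAt a b 0)
    = numerAt a b 1 := by
  rw [numerAt, map_prod, numerAt]
  refine Finset.prod_congr rfl fun i _ => ?_
  rw [map_pow, map_sub, renameswap_X0, MvPolynomial.rename_C]

lemma renameswap_numer1 : MvPolynomial.rename (Equiv.swap (0 : Fin 2) 1) (numerAt a b 1)
    = numerAt a b 0 := by
  rw [numerAt, map_prod, numerAt]
  refine Finset.prod_congr rfl fun i _ => ?_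
  rw [map_pow, map_sub, renameswap_X1, MvPolynomial.rename_C]

lemma renameswap_denom0 : MvPolynomial.rename (Equiv.swap (0 : Fin 2) 1) (denomAt a b 0)
    = denomAt a b 1 := by
  rw [denomAt, map_prod, denomAt]
  refine Finset.prod_congr rfl fun i _ => ?_
  rw [map_pow, map_sub, renameswap_X0, MvPolynomial.rename_C]

lemma renameswap_denom1 : MvPolynomial.rename (Equiv.swap (0 : Fin 2) 1) (denomAt a b 1)
    = denomAt a b 0 := by
  rw [denomAt, map_prod, denomAt]
  refine Finset.prod_congr rfl fun i _ => ?_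
  rw [map_pow, map_sub, renameswap_X1, MvPolynomial.rename_C]

lemma renameswap_swap (F : MvPolynomial (Fin 2) ℂ) :
    MvPolynomial.rename (Equiv.swap (0 : Fin 2) 1)
      (MvPolynomial.rename (Equiv.swap (0 : Fin 2) 1) F) = F := by
  rw [MvPolynomial.rename_rename]
  have h : (⇑(Equiv.swap (0 : Fin 2) 1) ∘ ⇑(Equiv.swap (0 : Fin 2) 1)) = id :=
    funext fun x => Equiv.swap_apply_self _ _ x
  rw [h, MvPolynomial.rename_id, AlgHom.id_apply]

lemma hd0 : (MvPolynomial.X 0 - MvPolynomial.X 1 : MvPolynomial (Fin 2) ℂ) ≠ 0 := by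
  intro h
  have h2 := congrArg (MvPolynomial.aeval ![(1:ℂ), 0]) h
  simp at h2

lemma diag_d : diag (MvPolynomial.X 0 - MvPolynomial.X 1) = 0 := by
  rw [diag_sub, diag_X, diag_X, sub_self]

lemma renameswap_d : MvPolynomial.rename (Equiv.swap (0 : Fin 2) 1)
    (MvPolynomial.X 0 - MvPolynomial.X 1 : MvPolynomial (Fin 2) ℂ)
    = -(MvPolynomial.X 0 - MvPolynomial.X 1) := by
  rw [map_sub, renameswap_X0, renameswap_X1]
  ring

lemma dvd_sub_diagSub (F : MvPolynomial (Fin 2) ℂ) :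
    (MvPolynomial.X 0 - MvPolynomial.X 1 : MvPolynomial (Fin 2) ℂ) ∣
      F - MvPolynomial.aeval (fun _ : Fin 2 => (MvPolynomial.X 1 : MvPolynomial (Fin 2) ℂ)) F := by
  induction F using MvPolynomial.induction_on with
  | C c =>
    rw [MvPolynomial.aeval_C, MvPolynomial.algebraMap_eq, sub_self]
    exact dvd_zero _
  | add p q hp hq =>
    rw [map_add]
    have h : p + q - (MvPolynomial.aeval (fun _ : Fin 2 => (MvPolynomial.X 1 : MvPolynomial (Fin 2) ℂ)) p
        + MvPolynomial.aeval (fun _ : Fin 2 => (MvPolynomial.X 1 : MvPolynomial (Fin 2) ℂ)) q)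
        = (p - MvPolynomial.aeval (fun _ : Fin 2 => (MvPolynomial.X 1 : MvPolynomial (Fin 2) ℂ)) p)
        + (q - MvPolynomial.aeval (fun _ : Fin 2 => (MvPolynomial.X 1 : MvPolynomial (Fin 2) ℂ)) q) := by
      ring
    rw [h]
    exact dvd_add hp hq
  | mul_X p i hp =>
    rw [map_mul, MvPolynomial.aeval_X]
    have hXi : (MvPolynomial.X 0 - MvPolynomial.X 1 : MvPolynomial (Fin 2) ℂ) ∣
        (MvPolynomial.X i - MvPolynomial.X 1) := by
      fin_cases i
      · exact dvd_refl _
      · show (MvPolynomial.X 0 - MvPolynomial.X 1 : MvPolynomial (Fin 2) ℂ) ∣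
          MvPolynomial.X 1 - MvPolynomial.X 1
        rw [sub_self]; exact dvd_zero _
    have h : p * MvPolynomial.X i
        - MvPolynomial.aeval (fun _ : Fin 2 => (MvPolynomial.X 1 : MvPolynomial (Fin 2) ℂ)) p * MvPolynomial.X 1
        = p * (MvPolynomial.X i - MvPolynomial.X 1)
        + (p - MvPolynomial.aeval (fun _ : Fin 2 => (MvPolynomial.X 1 : MvPolynomial (Fin 2) ℂ)) p)
          * MvPolynomial.X 1 := by
      ring
    rw [h]
    exact dvd_add (hXi.mul_left p) (hp.mul_right _)

lemma diag_zero_dvd {H : MvPolynomial (Fin 2) ℂ} (h : diag H = 0) :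
    (MvPolynomial.X 0 - MvPolynomial.X 1 : MvPolynomial (Fin 2) ℂ) ∣ H := by
  have hcomp := DFunLike.congr_fun
    (MvPolynomial.comp_aeval (f := fun _ : Fin 2 => (Polynomial.X : Polynomial ℂ))
      (φ := Polynomial.aeval (MvPolynomial.X 1 : MvPolynomial (Fin 2) ℂ))) H
  simp only [AlgHom.coe_comp, Function.comp_apply, Polynomial.aeval_X] at hcomp
  have h2 : MvPolynomial.aeval (fun _ : Fin 2 => (MvPolynomial.X 1 : MvPolynomial (Fin 2) ℂ)) H = 0 := by
    rw [← hcomp, ← diag, h, map_zero]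
  have h3 := dvd_sub_diagSub H
  rwa [h2, sub_zero] at h3

lemma memQ_sub {m : ℕ} {F F' : MvPolynomial (Fin 2) ℂ} (h1 : MemQalg a b m F)
    (h2 : MemQalg a b m F') : MemQalg a b m (F - F') := by
  rw [MemQalg] at *
  rw [map_sub]
  have h : numerAt a b 0 * denomAt a b 1 * (F - F')
      - numerAt a b 1 * denomAt a b 0 * (MvPolynomial.rename (Equiv.swap (0 : Fin 2) 1) F
          - MvPolynomial.rename (Equiv.swap (0 : Fin 2) 1) F')
      = (numerAt a b 0 * denomAt a b 1 * F
          - numerAt a b 1 * denomAt a b 0 * MvPolynomial.rename (Equiv.swap (0 : Fin 2) 1) F)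
      - (numerAt a b 0 * denomAt a b 1 * F'
          - numerAt a b 1 * denomAt a b 0 * MvPolynomial.rename (Equiv.swap (0 : Fin 2) 1) F') := by
    ring
  rw [h]
  exact dvd_sub h1 h2

lemma memQ_symm_mul {m : ℕ} {S P : MvPolynomial (Fin 2) ℂ}
    (hS : MvPolynomial.rename (Equiv.swap (0 : Fin 2) 1) S = S)
    (hP : MemQalg a b m P) : MemQalg a b m (S * P) := by
  rw [MemQalg] at *
  rw [map_mul, hS]
  have h : numerAt a b 0 * denomAt a b 1 * (S * P)
      - numerAt a b 1 * denomAt a b 0 * (S * MvPolynomial.rename (Equiv.swap (0 : Fin 2) 1) P)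
      = S * (numerAt a b 0 * denomAt a b 1 * P
          - numerAt a b 1 * denomAt a b 0 * MvPolynomial.rename (Equiv.swap (0 : Fin 2) 1) P) := by
    ring
  rw [h]
  exact hP.mul_left S

lemma diag_numer_ne : diag (numerAt a b 0) ≠ 0 := by
  rw [numerAt, diag_prod]
  apply Finset.prod_ne_zero_iff.mpr
  intro i _
  rw [diag_pow, diag_sub, diag_X, diag_C]
  exact pow_ne_zero _ (Polynomial.X_sub_C_ne_zero (a i))

lemma diag_denom_ne : diag (denomAt a b 0) ≠ 0 := by
  rw [denomAt, diag_prod]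
  apply Finset.prod_ne_zero_iff.mpr
  intro i _
  rw [diag_pow, diag_sub, diag_X, diag_C]
  exact pow_ne_zero _ (Polynomial.X_sub_C_ne_zero (a i))

lemma diag_numer1 : diag (numerAt a b 1) = diag (numerAt a b 0) := by
  rw [← renameswap_numer0, diag_rename_swap]

lemma diag_denom1 : diag (denomAt a b 1) = diag (denomAt a b 0) := by
  rw [← renameswap_denom0, diag_rename_swap]

-- the step lemma
lemma step (m : ℕ) (H : MvPolynomial (Fin 2) ℂ) (hH : MemQalg a b (m+1) H)
    (hd : diag H = 0) :
    ∃ L, H = (MvPolynomial.X 0 - MvPolynomial.X 1)^2 * L ∧ MemQalg a b m L := by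
  obtain ⟨K, hK⟩ := diag_zero_dvd hd
  obtain ⟨W, hW⟩ := hH
  have hσH : MvPolynomial.rename (Equiv.swap (0 : Fin 2) 1) H
      = -((MvPolynomial.X 0 - MvPolynomial.X 1)
          * MvPolynomial.rename (Equiv.swap (0 : Fin 2) 1) K) := by
    rw [hK, map_mul, renameswap_d]
    ring
  rw [hσH, hK] at hW
  have hW2 : (MvPolynomial.X 0 - MvPolynomial.X 1) *
      (numerAt a b 0 * denomAt a b 1 * K
        + numerAt a b 1 * denomAt a b 0 * MvPolynomial.rename (Equiv.swap (0 : Fin 2) 1) K)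
      = (MvPolynomial.X 0 - MvPolynomial.X 1) *
        ((MvPolynomial.X 0 - MvPolynomial.X 1) ^ (2 * m + 2) * W) := by
    calc (MvPolynomial.X 0 - MvPolynomial.X 1) *
        (numerAt a b 0 * denomAt a b 1 * K
          + numerAt a b 1 * denomAt a b 0 * MvPolynomial.rename (Equiv.swap (0 : Fin 2) 1) K)
        = numerAt a b 0 * denomAt a b 1 * ((MvPolynomial.X 0 - MvPolynomial.X 1) * K) -
            numerAt a b 1 * denomAt a b 0 *
              -((MvPolynomial.X 0 - MvPolynomial.X 1)
                * MvPolynomial.rename (Equiv.swap (0 : Fin 2) 1) K) := by ring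
      _ = (MvPolynomial.X 0 - MvPolynomial.X 1) ^ (2 * (m+1) + 1) * W := hW
      _ = (MvPolynomial.X 0 - MvPolynomial.X 1) *
          ((MvPolynomial.X 0 - MvPolynomial.X 1) ^ (2 * m + 2) * W) := by
        rw [show 2 * (m+1) + 1 = (2 * m + 2) + 1 from by ring, pow_succ]
        ring
  have hE := mul_left_cancel₀ hd0 hW2
  -- diagonal of hE
  have hdiagE := congrArg diag hE
  have hdK : diag K = 0 := by
    simp only [diag_add, diag_mul, diag_pow] at hdiagE
    rw [diag_d, diag_rename_swap, diag_numer1, diag_denom1,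
      zero_pow (by omega : 2*m+2 ≠ 0), zero_mul] at hdiagE
    have h2 : (2 : Polynomial ℂ) * (diag (numerAt a b 0) * diag (denomAt a b 0)) * diag K = 0 := by
      rw [← hdiagE]; ring
    have h3 := mul_eq_zero.mp h2
    rcases h3 with h3 | h3
    · exfalso
      rcases mul_eq_zero.mp h3 with h4 | h4
      · exact two_ne_zero (by exact_mod_cast h4)
      · rcases mul_eq_zero.mp h4 with h5 | h5
        · exact diag_numer_ne a b h5
        · exact diag_denom_ne a b h5
    · exact h3
  obtain ⟨L, hL⟩ := diag_zero_dvd hdK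
  refine ⟨L, by rw [hK, hL]; ring, ?_⟩
  rw [MemQalg]
  refine ⟨W, ?_⟩
  have hσL : MvPolynomial.rename (Equiv.swap (0 : Fin 2) 1) K
      = -((MvPolynomial.X 0 - MvPolynomial.X 1)
          * MvPolynomial.rename (Equiv.swap (0 : Fin 2) 1) L) := by
    rw [hL, map_mul, renameswap_d]
    ring
  rw [hσL, hL] at hE
  have hE2 : (MvPolynomial.X 0 - MvPolynomial.X 1) *
      (numerAt a b 0 * denomAt a b 1 * L
        - numerAt a b 1 * denomAt a b 0 * MvPolynomial.rename (Equiv.swap (0 : Fin 2) 1) L)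
      = (MvPolynomial.X 0 - MvPolynomial.X 1) *
        ((MvPolynomial.X 0 - MvPolynomial.X 1) ^ (2 * m + 1) * W) := by
    calc (MvPolynomial.X 0 - MvPolynomial.X 1) *
        (numerAt a b 0 * denomAt a b 1 * L
          - numerAt a b 1 * denomAt a b 0 * MvPolynomial.rename (Equiv.swap (0 : Fin 2) 1) L)
        = numerAt a b 0 * denomAt a b 1 * ((MvPolynomial.X 0 - MvPolynomial.X 1) * L) +
            numerAt a b 1 * denomAt a b 0 *
              -((MvPolynomial.X 0 - MvPolynomial.X 1)
                * MvPolynomial.rename (Equiv.swap (0 : Fin 2) 1) L) := by ring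
      _ = (MvPolynomial.X 0 - MvPolynomial.X 1) ^ (2 * m + 2) * W := hE
      _ = (MvPolynomial.X 0 - MvPolynomial.X 1) *
          ((MvPolynomial.X 0 - MvPolynomial.X 1) ^ (2 * m + 1) * W) := by
        rw [show 2 * m + 2 = (2 * m + 1) + 1 from by ring, pow_succ]
        ring
  exact mul_left_cancel₀ hd0 hE2

lemma memQalg_neg {m : ℕ} {F : MvPolynomial (Fin 2) ℂ} (hF : MemQalg a b m F) :
    MemQalg a (fun i => -(b i)) m (MvPolynomial.rename (Equiv.swap (0 : Fin 2) 1) F) := by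
  have hnum : ∀ v, numerAt a (fun i => -(b i)) v = denomAt a b v := by
    intro v
    rw [numerAt, denomAt]
    apply Finset.prod_congr
    · apply Finset.filter_congr
      intro i _
      exact neg_pos
    · intros; rfl
  have hden : ∀ v, denomAt a (fun i => -(b i)) v = numerAt a b v := by
    intro v
    rw [numerAt, denomAt]
    apply Finset.prod_congr
    · apply Finset.filter_congr
      intro i _
      exact neg_lt_zero
    · intro i _
      congr 1
      show (-(-(b i))).toNat = (b i).toNat
      norm_num
  rw [MemQalg, hnum, hnum, hden, hden, renameswap_swap]
  have h : denomAt a b 0 * numerAt a b 1 * MvPolynomial.rename (Equiv.swap (0 : Fin 2) 1) F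
      - denomAt a b 1 * numerAt a b 0 * F
      = -(numerAt a b 0 * denomAt a b 1 * F
          - numerAt a b 1 * denomAt a b 0 * MvPolynomial.rename (Equiv.swap (0 : Fin 2) 1) F) := by
    ring
  rw [h]
  exact dvd_neg.mpr hF

lemma lemA (m : ℕ) (hm : 1 ≤ m) (ha : Function.Injective a)
    (F : MvPolynomial (Fin 2) ℂ) (hF : MemQalg a b m F) :
    (∏ j : Fin r, (Polynomial.X - Polynomial.C (a j)) ^ (min m (b j).natAbs)) ∣ diag F := by
  apply Finset.prod_dvd_of_coprime
  · intro i _ j _ hij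
    exact ((Polynomial.pairwise_coprime_X_sub_C ha hij).pow)
  · intro j _
    rcases lt_trichotomy (b j) 0 with hneg | hzero | hpos
    · have h1 := lemA_pos m hm a (fun i => -(b i)) ha j (neg_pos.mpr hneg)
        (MvPolynomial.rename (Equiv.swap (0 : Fin 2) 1) F) (memQalg_neg a b hF)
      rw [diag_rename_swap] at h1
      have h2 : ((fun i => -(b i)) j).toNat = (b j).natAbs := by
        show (-(b j)).toNat = (b j).natAbs
        omega
      rwa [h2] at h1
    · rw [hzero]
      norm_num
    · have h1 := lemA_pos m hm a b ha j hpos F hF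
      have h2 : (b j).toNat = (b j).natAbs := by omega
      rwa [h2] at h1

end PartFour

section PartFive

noncomputable def symLift (q : Polynomial ℂ) : MvPolynomial (Fin 2) ℂ :=
  Polynomial.aeval (MvPolynomial.C (2⁻¹:ℂ) * (MvPolynomial.X 0 + MvPolynomial.X 1)) q

lemma symLift_symm (q : Polynomial ℂ) :
    MvPolynomial.rename (Equiv.swap (0 : Fin 2) 1) (symLift q) = symLift q := by
  rw [symLift, ← Polynomial.aeval_algHom_apply]
  congr 1
  rw [map_mul, map_add, renameswap_X0, renameswap_X1, MvPolynomial.rename_C]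
  ring

lemma diag_symLift (q : Polynomial ℂ) : diag (symLift q) = q := by
  rw [symLift, diag, ← Polynomial.aeval_algHom_apply]
  have hx : (MvPolynomial.aeval (fun _ : Fin 2 => (Polynomial.X : Polynomial ℂ)))
      (MvPolynomial.C (2⁻¹:ℂ) * (MvPolynomial.X 0 + MvPolynomial.X 1)) = Polynomial.X := by
    rw [map_mul, map_add, MvPolynomial.aeval_X, MvPolynomial.aeval_X, MvPolynomial.aeval_C]
    have h1 : algebraMap ℂ (Polynomial ℂ) (2⁻¹:ℂ) = Polynomial.C (2⁻¹:ℂ) := rfl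
    rw [h1, ← two_mul, ← mul_assoc]
    have h2 : (Polynomial.C (2⁻¹:ℂ)) * 2 = 1 := by
      rw [← map_ofNat (Polynomial.C : ℂ →+* Polynomial ℂ) 2, ← Polynomial.C_mul]
      norm_num
    rw [h2, one_mul]
  rw [hx]
  exact Polynomial.aeval_X_left_apply q

lemma aux {r : ℕ} (a : Fin r → ℂ) (b : Fin r → ℤ) (ha : Function.Injective a)
    (P : ℕ → MvPolynomial (Fin 2) ℂ) :
    ∀ n : ℕ,
      (∀ i ∈ Finset.Icc 1 n, MemQalg a b i (P i) ∧
        diag (P i) = ∏ j : Fin r, (Polynomial.X - Polynomial.C (a j)) ^ (min i (b j).natAbs)) →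
      ∀ F : MvPolynomial (Fin 2) ℂ, MemQalg a b n F →
      ∃ (s : ℕ → MvPolynomial (Fin 2) ℂ) (G : MvPolynomial (Fin 2) ℂ),
        (∀ i ∈ Finset.Icc 1 n, MvPolynomial.rename (Equiv.swap (0 : Fin 2) 1) (s i) = s i) ∧
        F = (∑ i ∈ Finset.Icc 1 n, s i * (MvPolynomial.X 0 - MvPolynomial.X 1) ^ (2 * (n - i)) * P i)
              + (MvPolynomial.X 0 - MvPolynomial.X 1) ^ (2 * n) * G := by
  intro n
  induction n with
  | zero =>
    intro _ F hF
    exact ⟨fun _ => 0, F, by simp, by simp⟩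
  | succ n IH =>
    intro hP F hF
    have hPd := hP (n+1) (by simp)
    have hdvd := lemA a b (n+1) (by omega) ha F hF
    rw [← hPd.2] at hdvd
    obtain ⟨q, hq⟩ := hdvd
    have hSsym := symLift_symm q
    have hSdiag := diag_symLift q
    have hHmem : MemQalg a b (n+1) (F - symLift q * P (n+1)) :=
      memQ_sub a b hF (memQ_symm_mul a b hSsym hPd.1)
    have hHdiag : diag (F - symLift q * P (n+1)) = 0 := by
      rw [diag_sub, diag_mul, hSdiag, hq]
      ring
    obtain ⟨L, hL, hLm⟩ := step a b n _ hHmem hHdiag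
    obtain ⟨s, G, hsym, hrep⟩ := IH (fun i hi => hP i (Finset.mem_Icc.mpr
      ⟨(Finset.mem_Icc.mp hi).1, le_trans (Finset.mem_Icc.mp hi).2 (Nat.le_succ n)⟩)) L hLm
    have hmem' : ∀ i ∈ Finset.Icc 1 n, i ≤ n := fun i hi => (Finset.mem_Icc.mp hi).2
    refine ⟨Function.update s (n+1) (symLift q), G, ?_, ?_⟩
    · intro i hi
      rcases Finset.mem_Icc.mp hi with ⟨hi1, hi2⟩
      by_cases hcase : i = n+1
      · rw [Function.update_apply, if_pos hcase]
        exact hSsym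
      · rw [Function.update_apply, if_neg hcase]
        exact hsym i (Finset.mem_Icc.mpr ⟨hi1, by omega⟩)
    · have hF' : F = (MvPolynomial.X 0 - MvPolynomial.X 1)^2 * L + symLift q * P (n+1) := by
        linear_combination hL
      rw [hrep] at hF'
      rw [hF']
      rw [Finset.sum_Icc_succ_top (by omega : 1 ≤ n+1), Function.update_self]
      have hterm : ∀ i ∈ Finset.Icc 1 n,
          Function.update s (n+1) (symLift q) i
            * (MvPolynomial.X 0 - MvPolynomial.X 1) ^ (2 * (n + 1 - i)) * P i
          = (MvPolynomial.X 0 - MvPolynomial.X 1)^2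
            * (s i * (MvPolynomial.X 0 - MvPolynomial.X 1) ^ (2 * (n - i)) * P i) := by
        intro i hi
        rcases Finset.mem_Icc.mp hi with ⟨hi1, hi2⟩
        rw [Function.update_apply, if_neg (by omega)]
        rw [show 2 * (n + 1 - i) = 2 * (n - i) + 2 from by omega, pow_add]
        ring
      rw [Finset.sum_congr rfl hterm, ← Finset.mul_sum]
      rw [show n + 1 - (n + 1) = 0 from by omega]
      rw [show 2 * (n+1) = 2*n + 2 from by ring]
      rw [pow_add]
      ring

end PartFive

end AuxiliaryProofsB

/-- let `m ≥ 1`, `f = ∏ j (x − a_j)^{b_j}` with the `a_j` pairwise distinct,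
and suppose for each `1 ≤ i ≤ m` a polynomial `P_i ∈ Q_i(f)` is given with
`P_i(x,x) = ∏ j (x − a_j)^{d_i(b_j)}`. Then every `F ∈ Q_m(f)` can be written as
`F = Σ_{i=1}^m s_i·(x − y)^{2(m−i)}·P_i + (x − y)^{2m}·G` with each `s_i` symmetric and
`G ∈ ℂ[x,y]` arbitrary. -/
theorem stmt17 (m : ℕ) (hm : 1 ≤ m) (r : ℕ) (a : Fin r → ℂ) (b : Fin r → ℤ)
    (ha : Function.Injective a)
    (P : ℕ → MvPolynomial (Fin 2) ℂ)
    (hP : ∀ i ∈ Finset.Icc 1 m, MemQalg a b i (P i) ∧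
      diag (P i) = ∏ j : Fin r, (Polynomial.X - Polynomial.C (a j)) ^ (min i (b j).natAbs))
    (F : MvPolynomial (Fin 2) ℂ) (hF : MemQalg a b m F) :
    ∃ (s : ℕ → MvPolynomial (Fin 2) ℂ) (G : MvPolynomial (Fin 2) ℂ),
      (∀ i ∈ Finset.Icc 1 m, rename (Equiv.swap (0 : Fin 2) 1) (s i) = s i) ∧
      F = (∑ i ∈ Finset.Icc 1 m, s i * (X 0 - X 1) ^ (2 * (m - i)) * P i)
            + (X 0 - X 1) ^ (2 * m) * G := by
  obtain ⟨s, G, h1, h2⟩ := aux a b ha P m hP F hF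
  exact ⟨s, G, h1, h2⟩
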